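/- arXiv:1910.11055 — 2 statements merged into one kernel-verified Lean document; each statement's English description precedes it below -/
import Mathlib

section
/- Let E be a vector lattice with the principal projection property, F a vector lattice, Φ : 𝔅(E) → 𝔅(F) a Boolean homomorphism, and T : E → F atomic subordinate to Φ. Then for every x ∈ E and every fragment y ⊑ x, T y is a fragment of T x and |T y| ≤ |T x|; in particular T is laterally-to-order bounded, i.e. the image T(𝓕_x) of the set of fragments of x is order bounded in F for every x ∈ E. -/
/-!
A fragment `y` of `x` is the image of `x` under the principal projection `π_y`: this projection
fixes `y` and kills `x - y`, which is disjoint from `y`. Atomicity then gives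
`T y = Φ(π_y) (T x)`, and since `Φ(π_y)` is an order projection on `F`, its value at `T x` is a
fragment of `T x` dominated by `|T x|` in absolute value; hence `-|T x| ≤ T y ≤ |T x|`.
-/

namespace VL

/-- Two elements of a vector lattice are disjoint if `|x| ⊓ |y| = 0`. -/
def VDisjoint {G : Type*} [Lattice G] [AddCommGroup G] (x y : G) : Prop :=
  |x| ⊓ |y| = 0

/-- `y` is a fragment of `x` if `y ⊥ (x - y)`. -/
def Fragment {G : Type*} [Lattice G] [AddCommGroup G] (y x : G) : Prop :=
  VDisjoint y (x - y)

/-- An order projection: a linear idempotent `π` with `0 ≤ π x ≤ x` for all `x ≥ 0`. -/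
def IsOrderProjection {G : Type*} [Lattice G] [AddCommGroup G] [Module ℝ G]
    (π : G →ₗ[ℝ] G) : Prop :=
  (∀ x, π (π x) = π x) ∧ ∀ x : G, 0 ≤ x → 0 ≤ π x ∧ π x ≤ x

/-- A map between the order projections of `E` and of `F` is a Boolean homomorphism if it
maps order projections to order projections and preserves the Boolean operations
`π ∧ ρ = π ∘ ρ`, `π ∨ ρ = π + ρ - π ∘ ρ` and `compl π = Id - π`. -/
def IsBooleanHom {E F : Type*} [Lattice E] [AddCommGroup E] [Module ℝ E]
    [Lattice F] [AddCommGroup F] [Module ℝ F]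
    (Φ : (E →ₗ[ℝ] E) → (F →ₗ[ℝ] F)) : Prop :=
  (∀ π, IsOrderProjection π → IsOrderProjection (Φ π)) ∧
  (∀ π ρ, IsOrderProjection π → IsOrderProjection ρ →
    Φ (π ∘ₗ ρ) = Φ π ∘ₗ Φ ρ) ∧
  (∀ π ρ, IsOrderProjection π → IsOrderProjection ρ →
    Φ (π + ρ - π ∘ₗ ρ) = Φ π + Φ ρ - Φ π ∘ₗ Φ ρ) ∧
  (∀ π, IsOrderProjection π → Φ (LinearMap.id - π) = LinearMap.id - Φ π)

/-- `T` is atomic subordinate to `Φ` if `T (π x) = Φ(π) (T x)` for every order projection. -/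
def IsAtomic {E F : Type*} [Lattice E] [AddCommGroup E] [Module ℝ E]
    [Lattice F] [AddCommGroup F] [Module ℝ F]
    (Φ : (E →ₗ[ℝ] E) → (F →ₗ[ℝ] F)) (T : E → F) : Prop :=
  ∀ π : E →ₗ[ℝ] E, IsOrderProjection π → ∀ x : E, T (π x) = Φ π (T x)

/-- The principal projection property: for every `x` there is an order projection `π_x`
(the projection onto the band generated by `x`) such that `z - π_x z ⊥ x` for all `z`,
and `π_x z ⊥ w` whenever `w ⊥ x`. -/
def HasPPP (E : Type*) [Lattice E] [AddCommGroup E] [Module ℝ E] : Prop :=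
  ∀ x : E, ∃ π : E →ₗ[ℝ] E, IsOrderProjection π ∧
    (∀ z : E, VDisjoint (z - π z) x) ∧
    (∀ z w : E, VDisjoint w x → VDisjoint (π z) w)

/-- Dedekind completeness: every nonempty set bounded above has a supremum. -/
def DedekindComplete (F : Type*) [Lattice F] : Prop :=
  ∀ S : Set F, S.Nonempty → BddAbove S → ∃ b, IsLUB S b

section LatticeGroup

variable {G : Type*} [Lattice G] [AddCommGroup G]

theorem VDisjoint.symm {a b : G} (h : VDisjoint a b) : VDisjoint b a := by
  rwa [VDisjoint, inf_comm]

variable [CovariantClass G G (· + ·) (· ≤ ·)]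

theorem eq_zero_of_vdisjoint_of_eq_sub {a b c : G} (hab : VDisjoint a b) (hac : VDisjoint a c)
    (h : a = b - c) : a = 0 := by
  have habs : |a| ≤ |b| + |c| := by
    simpa [h, sub_eq_add_neg] using abs_add_le b (-c)
  have hle : |a| - |a| ⊓ |c| ≤ |a| ⊓ |b| := by
    refine le_inf (sub_le_self _ (le_inf (abs_nonneg a) (abs_nonneg c))) ?_
    rw [sub_inf, sub_self]
    exact sup_le (abs_nonneg b) (sub_le_iff_le_add.mpr habs)
  rw [hab, hac, sub_zero] at hle
  exact le_antisymm ((le_abs_self a).trans hle) (neg_nonpos.mp ((neg_le_abs a).trans hle))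

end LatticeGroup

namespace IsOrderProjection

variable {G : Type*} [Lattice G] [AddCommGroup G] [Module ℝ G]
  [CovariantClass G G (· + ·) (· ≤ ·)] {π : G →ₗ[ℝ] G}

theorem monotone (hπ : IsOrderProjection π) : Monotone π := fun u w h => by
  simpa using (hπ.2 (w - u) (sub_nonneg.mpr h)).1

theorem compl (hπ : IsOrderProjection π) : IsOrderProjection (LinearMap.id - π) := by
  refine ⟨fun x => by simp [hπ.1], fun x hx => ?_⟩
  obtain ⟨h0, h1⟩ := hπ.2 x hx
  exact ⟨sub_nonneg.mpr h1, sub_le_self x h0⟩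

theorem abs_apply_le (hπ : IsOrderProjection π) (v : G) : |π v| ≤ π |v| :=
  abs_le'.mpr ⟨hπ.monotone (le_abs_self v), by simpa using hπ.monotone (neg_le_abs v)⟩

theorem abs_apply_le_abs (hπ : IsOrderProjection π) (v : G) : |π v| ≤ |v| :=
  (hπ.abs_apply_le v).trans (hπ.2 |v| (abs_nonneg v)).2

theorem inf_sub_apply_eq_zero (hπ : IsOrderProjection π) {u : G} (hu : 0 ≤ u) :
    π u ⊓ (u - π u) = 0 := by
  set c := π u ⊓ (u - π u)
  have hc : 0 ≤ c := le_inf (hπ.2 u hu).1 (sub_nonneg.mpr (hπ.2 u hu).2)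
  have hπc : π c = 0 := by
    refine le_antisymm ?_ (hπ.2 c hc).1
    simpa [hπ.1] using hπ.monotone (inf_le_right : c ≤ u - π u)
  have hc' : c - π c ≤ π u - π (π u) := hπ.compl.monotone (inf_le_left : c ≤ π u)
  rw [hπ.1, hπc, sub_self, sub_zero] at hc'
  exact le_antisymm hc' hc

theorem fragment_apply (hπ : IsOrderProjection π) (v : G) : Fragment (π v) v := by
  have hcompl : |v - π v| ≤ |v| - π |v| := by simpa using hπ.compl.abs_apply_le v
  refine le_antisymm ?_ (le_inf (abs_nonneg _) (abs_nonneg _))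
  calc |π v| ⊓ |v - π v| ≤ π |v| ⊓ (|v| - π |v|) := inf_le_inf (hπ.abs_apply_le v) hcompl
    _ = 0 := hπ.inf_sub_apply_eq_zero (abs_nonneg v)

end IsOrderProjection

/-- `π` is the projection `π_x` of the principal projection property. -/
def IsPrincipalProjection {G : Type*} [Lattice G] [AddCommGroup G] [Module ℝ G]
    (π : G →ₗ[ℝ] G) (x : G) : Prop :=
  IsOrderProjection π ∧ (∀ z : G, VDisjoint (z - π z) x) ∧
    ∀ z w : G, VDisjoint w x → VDisjoint (π z) w

namespace IsPrincipalProjection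

variable {G : Type*} [Lattice G] [AddCommGroup G] [Module ℝ G]
  [CovariantClass G G (· + ·) (· ≤ ·)] {π : G →ₗ[ℝ] G} {x : G}

theorem apply_eq_zero (hπ : IsPrincipalProjection π x) {w : G} (hw : VDisjoint w x) :
    π w = 0 :=
  eq_zero_of_vdisjoint_of_eq_sub (hπ.2.2 w w hw) (hπ.2.2 w _ (hπ.2.1 w))
    (sub_sub_cancel w (π w)).symm

theorem apply_self (hπ : IsPrincipalProjection π x) : π x = x := by
  have h := eq_zero_of_vdisjoint_of_eq_sub (hπ.2.1 x) (hπ.2.2 x _ (hπ.2.1 x)).symm rfl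
  exact (sub_eq_zero.mp h).symm

theorem apply_of_fragment {y : G} (hπ : IsPrincipalProjection π y) (hyx : Fragment y x) :
    π x = y := by
  have h := hπ.apply_eq_zero (VDisjoint.symm hyx)
  rwa [map_sub, hπ.apply_self, sub_eq_zero] at h

end IsPrincipalProjection

variable {E F : Type*}
  [Lattice E] [AddCommGroup E] [Module ℝ E]
  [CovariantClass E E (· + ·) (· ≤ ·)] [PosSMulMono ℝ E]
  [Lattice F] [AddCommGroup F] [Module ℝ F]
  [CovariantClass F F (· + ·) (· ≤ ·)] [PosSMulMono ℝ F]

/-- an atomic operator maps fragments of `x` to fragments of `T x`, with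
`|T y| ≤ |T x|`; in particular it is laterally-to-order bounded. -/
theorem atomic_laterally_to_order_bounded
    (hE : HasPPP E) (Φ : (E →ₗ[ℝ] E) → (F →ₗ[ℝ] F)) (hΦ : IsBooleanHom Φ)
    (T : E → F) (hT : IsAtomic Φ T) :
    (∀ x y : E, Fragment y x → Fragment (T y) (T x) ∧ |T y| ≤ |T x|) ∧
    ∀ x : E, ∃ a b : F, ∀ y : E, Fragment y x → a ≤ T y ∧ T y ≤ b := by
  have hfragment : ∀ x y : E, Fragment y x → Fragment (T y) (T x) ∧ |T y| ≤ |T x| := by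
    intro x y hyx
    obtain ⟨π, hπ : IsPrincipalProjection π y⟩ := hE y
    have hΦπ : IsOrderProjection (Φ π) := hΦ.1 π hπ.1
    have hTy : T y = Φ π (T x) := by rw [← hπ.apply_of_fragment hyx, hT π hπ.1 x]
    rw [hTy]
    exact ⟨hΦπ.fragment_apply (T x), hΦπ.abs_apply_le_abs (T x)⟩
  refine ⟨hfragment, fun x => ⟨-|T x|, |T x|, fun y hy => ?_⟩⟩
  obtain ⟨hle, hneg_le⟩ := abs_le'.mp (hfragment x y hy).2
  exact ⟨neg_le.mpr hneg_le, hle⟩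

end VL
end

section
/- Let E be a vector lattice with the principal projection property, F a Dedekind complete vector lattice, Φ : 𝔅(E) → 𝔅(F) a Boolean homomorphism, T : E → F a positive orthogonally additive operator, and set R(T)(x) := inf { Σᵢ Φ(πᵢ)(T(πᵢ x)) : (πᵢ) ∈ 𝔇₀ }. Then R(T) is atomic subordinate to Φ (equivalently R(R(T)) = R(T)), and R(T) is the greatest atomic minorant of T: every positive orthogonally additive operator S : E → F that is atomic subordinate to Φ and satisfies S x ≤ T x for all x ∈ E also satisfies S x ≤ R(T)(x) for all x ∈ E. Thus R(T) is the component of T in the band of atomic operators subordinate to Φ. -/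
namespace VL

variable {E F : Type*}
  [Lattice E] [AddCommGroup E] [Module ℝ E]
  [CovariantClass E E (· + ·) (· ≤ ·)] [PosSMulMono ℝ E]
  [Lattice F] [AddCommGroup F] [Module ℝ F]
  [CovariantClass F F (· + ·) (· ≤ ·)] [PosSMulMono ℝ F]

/-- A finite partition of the identity: finitely many pairwise disjoint order projections
summing to the identity. -/
def IsPartitionOfIdentity {E : Type*} [Lattice E] [AddCommGroup E] [Module ℝ E]
    {n : ℕ} (π : Fin n → E →ₗ[ℝ] E) : Prop :=
  (∀ i, IsOrderProjection (π i)) ∧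
  (∀ i j, i ≠ j → (π i) ∘ₗ (π j) = 0) ∧
  (∑ i, π i) = LinearMap.id

/-- The set `{ Σᵢ Φ(πᵢ)(T(πᵢ x)) : (πᵢ) ∈ 𝔇₀ }` of values at `x` of the operators
associated to finite partitions of the identity. -/
def atomicSumSet (Φ : (E →ₗ[ℝ] E) → (F →ₗ[ℝ] F)) (T : E → F) (x : E) : Set F :=
  {w : F | ∃ (n : ℕ) (π : Fin n → E →ₗ[ℝ] E), IsPartitionOfIdentity π ∧
    w = ∑ i, Φ (π i) (T (π i x))}

/-!
Refining a partition of the identity `(πᵢ)` by an order projection `p` gives the partition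
`(p πᵢ, (Id - p) πᵢ)`. Evaluated at `p x`, its sum loses the `(Id - p)`-terms because `T 0 = 0`;
evaluated at `x` and hit by `Φ(p)`, it loses them because `Φ` is multiplicative. In both cases
what remains is `Σᵢ Φ(p πᵢ)(T(p πᵢ x))`, which lies below `Φ(p)` of the sum of `(πᵢ)` at `x`
(as `T(p y) ≤ T y`) and below the sum of `(πᵢ)` at `p x` (as `Φ(p) ≤ Id` on positive vectors).
This gives both inequalities between `R(T)(p x)` and `Φ(p)(R(T) x)`. An atomic minorant `S` of
`T` lies below every such sum, because `S x = Σᵢ Φ(πᵢ)(S(πᵢ x))`.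
-/

section Algebraic

variable {G H : Type*} [Lattice G] [AddCommGroup G] [Module ℝ G]
  [Lattice H] [AddCommGroup H] [Module ℝ H]

lemma isOrderProjection_zero : IsOrderProjection (0 : G →ₗ[ℝ] G) :=
  ⟨fun _ => rfl, fun _ hx => ⟨le_rfl, hx⟩⟩

lemma isOrderProjection_id : IsOrderProjection (LinearMap.id : G →ₗ[ℝ] G) :=
  ⟨fun _ => rfl, fun _ hx => ⟨hx, le_rfl⟩⟩

lemma IsOrderProjection.comp_self {p : G →ₗ[ℝ] G} (hp : IsOrderProjection p) : p ∘ₗ p = p :=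
  LinearMap.ext hp.1

lemma IsOrderProjection.comp_compl {p : G →ₗ[ℝ] G} (hp : IsOrderProjection p) :
    p ∘ₗ (LinearMap.id - p) = 0 := by
  rw [LinearMap.comp_sub, LinearMap.comp_id, hp.comp_self, sub_self]

namespace IsBooleanHom

variable {Φ : (G →ₗ[ℝ] G) → (H →ₗ[ℝ] H)}

lemma map_apply_map_apply (hΦ : IsBooleanHom Φ) {p q : G →ₗ[ℝ] G} (hp : IsOrderProjection p)
    (hq : IsOrderProjection q) (y : H) : Φ p (Φ q y) = Φ (p ∘ₗ q) y :=
  (LinearMap.congr_fun (hΦ.2.1 p q hp hq) y).symm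

lemma map_zero (hΦ : IsBooleanHom Φ) : Φ 0 = 0 := by
  have hcompl : Φ 0 = LinearMap.id - Φ LinearMap.id := by
    simpa using hΦ.2.2.2 _ isOrderProjection_id
  have hidem : Φ LinearMap.id ∘ₗ Φ LinearMap.id = Φ LinearMap.id := by
    simpa using (hΦ.2.1 _ _ isOrderProjection_id isOrderProjection_id).symm
  have hmul : Φ 0 = Φ LinearMap.id ∘ₗ Φ 0 := by
    simpa using hΦ.2.1 _ _ isOrderProjection_id isOrderProjection_zero
  rw [hmul, hcompl, LinearMap.comp_sub, LinearMap.comp_id, hidem, sub_self]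

lemma map_id (hΦ : IsBooleanHom Φ) : Φ LinearMap.id = LinearMap.id := by
  simpa [hΦ.map_zero] using hΦ.2.2.2 0 isOrderProjection_zero

lemma map_add_of_comp_eq_zero (hΦ : IsBooleanHom Φ) {p q : G →ₗ[ℝ] G}
    (hp : IsOrderProjection p) (hq : IsOrderProjection q) (h : p ∘ₗ q = 0) :
    Φ (p + q) = Φ p + Φ q := by
  have := hΦ.2.2.1 p q hp hq
  rwa [h, sub_zero, ← hΦ.2.1 p q hp hq, h, hΦ.map_zero, sub_zero] at this

end IsBooleanHom

end Algebraic

namespace IsOrderProjection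

variable {G : Type*} [Lattice G] [AddCommGroup G] [Module ℝ G] [AddLeftMono G]
  {p q : G →ₗ[ℝ] G}

lemma monotone_s11 (hp : IsOrderProjection p) : Monotone p := fun x y h => by
  simpa using (hp.2 (y - x) (sub_nonneg.2 h)).1

lemma compl_s11 (hp : IsOrderProjection p) : IsOrderProjection (LinearMap.id - p) :=
  ⟨fun x => by simp [hp.1 x], fun x hx => by simpa using ⟨(hp.2 x hx).2, (hp.2 x hx).1⟩⟩

lemma le_apply_self_of_le_apply (hp : IsOrderProjection p) {y z : G} (h : y ≤ p z) :
    y ≤ p y := by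
  simpa [hp.1] using hp.compl_s11.monotone_s11 h

lemma apply_inf_sub_apply_eq_zero (hp : IsOrderProjection p) {u v : G} (hu : 0 ≤ u)
    (hv : 0 ≤ v) : p u ⊓ (v - p v) = 0 := by
  set w := p u ⊓ (v - p v)
  have hw : 0 ≤ w := le_inf (hp.2 u hu).1 (sub_nonneg.2 (hp.2 v hv).2)
  have h1 : w ≤ p w := hp.le_apply_self_of_le_apply inf_le_left
  have h2 : p w ≤ 0 := by simpa [hp.1] using hp.monotone_s11 (inf_le_right : w ≤ v - p v)
  exact le_antisymm (h1.trans h2) hw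

lemma abs_apply_le_s11 (hp : IsOrderProjection p) (a : G) : |p a| ≤ p |a| :=
  abs_le'.2 ⟨hp.monotone_s11 (le_abs_self a), by simpa using hp.monotone_s11 (neg_le_abs a)⟩

lemma vDisjoint_apply_sub_apply (hp : IsOrderProjection p) (a b : G) :
    VDisjoint (p a) (b - p b) := by
  have hb : |b - p b| ≤ |b| - p |b| := by simpa using hp.compl_s11.abs_apply_le_s11 b
  refine le_antisymm ?_ (le_inf (abs_nonneg _) (abs_nonneg _))
  calc |p a| ⊓ |b - p b| ≤ p |a| ⊓ (|b| - p |b|) := inf_le_inf (hp.abs_apply_le_s11 a) hb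
    _ = 0 := hp.apply_inf_sub_apply_eq_zero (abs_nonneg a) (abs_nonneg b)

lemma apply_apply_eq_inf (hp : IsOrderProjection p) (hq : IsOrderProjection q) {x : G}
    (hx : 0 ≤ x) : p (q x) = p x ⊓ q x := by
  refine le_antisymm (le_inf (hp.monotone_s11 (hq.2 x hx).2) (hp.2 _ (hq.2 x hx).1).2) ?_
  calc p x ⊓ q x ≤ p (p x ⊓ q x) := hp.le_apply_self_of_le_apply inf_le_left
    _ ≤ p (q x) := hp.monotone_s11 inf_le_right

lemma comm (hp : IsOrderProjection p) (hq : IsOrderProjection q) : p ∘ₗ q = q ∘ₗ p := by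
  have key : ∀ z, 0 ≤ z → p (q z) = q (p z) := fun z hz => by
    rw [hp.apply_apply_eq_inf hq hz, hq.apply_apply_eq_inf hp hz, inf_comm]
  ext x
  rw [LinearMap.comp_apply, LinearMap.comp_apply, ← posPart_sub_negPart x, map_sub, map_sub,
    map_sub, map_sub, key _ (posPart_nonneg x), key _ (negPart_nonneg x)]

lemma comp (hp : IsOrderProjection p) (hq : IsOrderProjection q) :
    IsOrderProjection (p ∘ₗ q) := by
  refine ⟨fun x => ?_, fun x hx => ?_⟩
  · have h := LinearMap.congr_fun (hq.comm hp) (q x)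
    simp only [LinearMap.comp_apply] at h ⊢
    rw [h, hp.1, hq.1]
  · have hqx := hq.2 x hx
    exact ⟨(hp.2 _ hqx.1).1, (hp.2 _ hqx.1).2.trans hqx.2⟩

lemma add (hp : IsOrderProjection p) (hq : IsOrderProjection q) (h : p ∘ₗ q = 0) :
    IsOrderProjection (p + q) := by
  have hpq : ∀ x, p (q x) = 0 := LinearMap.congr_fun h
  have hqp : ∀ x, q (p x) = 0 := LinearMap.congr_fun ((hp.comm hq).symm.trans h)
  refine ⟨fun x => ?_, fun x hx => ⟨add_nonneg (hp.2 x hx).1 (hq.2 x hx).1, ?_⟩⟩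
  · simp only [LinearMap.add_apply, map_add, hp.1, hq.1, hpq, hqp, add_zero, zero_add]
  · have : q x ≤ x - p x := by
      simpa [hqp] using (hq.2 (x - p x) (sub_nonneg.2 (hp.2 x hx).2)).2
    exact le_sub_iff_add_le'.1 this

lemma isGLB_image (hq : IsOrderProjection q) {S : Set G} {b : G} (hne : S.Nonempty)
    (h : IsGLB S b) : IsGLB (q '' S) (q b) := by
  refine ⟨?_, fun c hc => ?_⟩
  · rintro _ ⟨s, hs, rfl⟩
    exact hq.monotone_s11 (h.1 hs)
  obtain ⟨s₀, hs₀⟩ := hne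
  have hcq : c ≤ q c := hq.le_apply_self_of_le_apply (hc ⟨s₀, hs₀, rfl⟩)
  -- `q c + (b - q b)` is a lower bound of `S`, hence lies below `b = q b + (b - q b)`.
  have hlow : q c + (b - q b) ≤ q b + (b - q b) := by
    rw [add_sub_cancel]
    refine h.2 fun s hs => ?_
    have h1 : q c ≤ q s := by simpa [hq.1] using hq.monotone_s11 (hc ⟨s, hs, rfl⟩)
    have h2 : b - q b ≤ s - q s := by simpa using hq.compl_s11.monotone_s11 (h.1 hs)
    simpa using add_le_add h1 h2
  exact hcq.trans (le_of_add_le_add_right hlow)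

end IsOrderProjection

section Refinement

variable {G : Type*} [AddCommGroup G] [Module ℝ G]

def refinement {m n : ℕ} (ρ : Fin m → G →ₗ[ℝ] G) (π : Fin n → G →ₗ[ℝ] G) :
    Fin (m * n) → G →ₗ[ℝ] G :=
  fun k => ρ (finProdFinEquiv.symm k).1 ∘ₗ π (finProdFinEquiv.symm k).2

lemma sum_refinement {M : Type*} [AddCommMonoid M] {m n : ℕ} (ρ : Fin m → G →ₗ[ℝ] G)
    (π : Fin n → G →ₗ[ℝ] G) (f : (G →ₗ[ℝ] G) → M) :
    ∑ k, f (refinement ρ π k) = ∑ a, ∑ b, f (ρ a ∘ₗ π b) := by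
  rw [← Fintype.sum_prod_type']
  exact finProdFinEquiv.symm.sum_comp fun ab => f (ρ ab.1 ∘ₗ π ab.2)

lemma comp_sum_eq_zero {ι : Type*} {π : ι → G →ₗ[ℝ] G}
    (hdisj : Pairwise fun i j => π i ∘ₗ π j = 0) {s : Finset ι} {j : ι} (hj : j ∉ s) :
    π j ∘ₗ ∑ i ∈ s, π i = 0 := by
  ext x
  simp only [LinearMap.comp_apply, LinearMap.sum_apply, map_sum, LinearMap.zero_apply]
  exact Finset.sum_eq_zero fun i hi =>
    LinearMap.congr_fun (hdisj fun hji : j = i => hj (hji ▸ hi)) x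

end Refinement

section Partition

variable {G : Type*} [Lattice G] [AddCommGroup G] [Module ℝ G] [AddLeftMono G]

lemma isOrderProjection_sum {ι : Type*} {π : ι → G →ₗ[ℝ] G}
    (hπ : ∀ i, IsOrderProjection (π i)) (hdisj : Pairwise fun i j => π i ∘ₗ π j = 0)
    (s : Finset ι) : IsOrderProjection (∑ i ∈ s, π i) := by
  classical
  induction s using Finset.induction with
  | empty => simpa using isOrderProjection_zero
  | insert j s hj ih =>
    rw [Finset.sum_insert hj]
    exact (hπ j).add ih (comp_sum_eq_zero hdisj hj)

lemma IsBooleanHom.map_sum {H : Type*} [Lattice H] [AddCommGroup H] [Module ℝ H]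
    {Φ : (G →ₗ[ℝ] G) → (H →ₗ[ℝ] H)} (hΦ : IsBooleanHom Φ) {ι : Type*}
    {π : ι → G →ₗ[ℝ] G} (hπ : ∀ i, IsOrderProjection (π i))
    (hdisj : Pairwise fun i j => π i ∘ₗ π j = 0) (s : Finset ι) :
    Φ (∑ i ∈ s, π i) = ∑ i ∈ s, Φ (π i) := by
  classical
  induction s using Finset.induction with
  | empty => simpa using hΦ.map_zero
  | insert j s hj ih =>
    rw [Finset.sum_insert hj, Finset.sum_insert hj, ← ih]
    exact hΦ.map_add_of_comp_eq_zero (hπ j) (isOrderProjection_sum hπ hdisj s)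
      (comp_sum_eq_zero hdisj hj)

lemma IsBooleanHom.sum_map_eq_id {H : Type*} [Lattice H] [AddCommGroup H] [Module ℝ H]
    {Φ : (G →ₗ[ℝ] G) → (H →ₗ[ℝ] H)} (hΦ : IsBooleanHom Φ) {n : ℕ}
    {π : Fin n → G →ₗ[ℝ] G} (hπ : IsPartitionOfIdentity π) : ∑ i, Φ (π i) = LinearMap.id := by
  rw [← hΦ.map_sum hπ.1 hπ.2.1, hπ.2.2, hΦ.map_id]

lemma IsPartitionOfIdentity.refinement {m n : ℕ} {ρ : Fin m → G →ₗ[ℝ] G}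
    {π : Fin n → G →ₗ[ℝ] G} (hρ : IsPartitionOfIdentity ρ) (hπ : IsPartitionOfIdentity π) :
    IsPartitionOfIdentity (refinement ρ π) := by
  refine ⟨fun k => (hρ.1 _).comp (hπ.1 _), fun k l hkl => ?_, ?_⟩
  · obtain ⟨⟨a, b⟩, rfl⟩ := finProdFinEquiv.surjective k
    obtain ⟨⟨c, d⟩, rfl⟩ := finProdFinEquiv.surjective l
    simp only [VL.refinement, Equiv.symm_apply_apply]
    -- `(ρₐ π_b)(ρ_c π_d) = (ρₐ ρ_c)(π_b π_d)` because `π_b` and `ρ_c` commute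
    rw [LinearMap.comp_assoc, ← LinearMap.comp_assoc (π d) (ρ c) (π b),
      (hπ.1 b).comm (hρ.1 c), LinearMap.comp_assoc, ← LinearMap.comp_assoc _ (ρ c) (ρ a)]
    by_cases hac : a = c
    · have hbd : b ≠ d := fun hbd => hkl (by rw [hac, hbd])
      rw [hπ.2.1 b d hbd, LinearMap.comp_zero]
    · rw [hρ.2.1 a c hac, LinearMap.zero_comp]
  · calc ∑ k, VL.refinement ρ π k = ∑ a, ∑ b, ρ a ∘ₗ π b := sum_refinement ρ π id
      _ = (∑ a, ρ a) ∘ₗ ∑ b, π b := by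
        ext x
        simp only [LinearMap.sum_apply, LinearMap.comp_apply, map_sum]
        exact Finset.sum_comm
      _ = LinearMap.id := by rw [hρ.2.2, hπ.2.2, LinearMap.id_comp]

lemma isPartitionOfIdentity_pair {p : G →ₗ[ℝ] G} (hp : IsOrderProjection p) :
    IsPartitionOfIdentity ![p, LinearMap.id - p] := by
  have hcompl_comp : (LinearMap.id - p) ∘ₗ p = 0 := by
    rw [LinearMap.sub_comp, LinearMap.id_comp, hp.comp_self, sub_self]
  refine ⟨Fin.forall_fin_two.2 ⟨hp, hp.compl_s11⟩, ?_, by simp⟩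
  intro i j hij
  fin_cases i <;> fin_cases j <;> simp_all [hp.comp_compl, hcompl_comp]

end Partition

def IsOrthogonallyAdditive {G H : Type*} [Lattice G] [AddCommGroup G] [Add H] (T : G → H) :
    Prop :=
  ∀ x y, VDisjoint x y → T (x + y) = T x + T y

lemma IsOrthogonallyAdditive.map_zero {G H : Type*} [Lattice G] [AddCommGroup G]
    [AddCommGroup H] {T : G → H} (hT : IsOrthogonallyAdditive T) : T 0 = 0 := by
  simpa using hT 0 0 (by simp [VDisjoint, abs])

lemma IsOrthogonallyAdditive.apply_le {G H : Type*} [Lattice G] [AddCommGroup G] [Module ℝ G]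
    [AddLeftMono G] [AddCommGroup H] [Preorder H] [AddLeftMono H] {T : G → H}
    (hT : IsOrthogonallyAdditive T) (hTpos : ∀ x, 0 ≤ T x) {p : G →ₗ[ℝ] G}
    (hp : IsOrderProjection p) (y : G) : T (p y) ≤ T y := by
  have hsplit := hT (p y) (y - p y) (hp.vDisjoint_apply_sub_apply y y)
  rw [add_sub_cancel] at hsplit
  exact hsplit ▸ le_add_of_nonneg_right (hTpos _)

section PartitionSum

variable {G H : Type*} [AddCommGroup G] [Module ℝ G] [AddCommGroup H] [Module ℝ H]

def partitionSum (Φ : (G →ₗ[ℝ] G) → (H →ₗ[ℝ] H)) (T : G → H) {n : ℕ}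
    (π : Fin n → G →ₗ[ℝ] G) (x : G) : H :=
  ∑ i, Φ (π i) (T (π i x))

lemma partitionSum_refinement_pair (Φ : (G →ₗ[ℝ] G) → (H →ₗ[ℝ] H)) (T : G → H) {n : ℕ}
    (p : G →ₗ[ℝ] G) (π : Fin n → G →ₗ[ℝ] G) (x : G) :
    partitionSum Φ T (refinement ![p, LinearMap.id - p] π) x =
      partitionSum Φ T (fun i => p ∘ₗ π i) x +
        partitionSum Φ T (fun i => (LinearMap.id - p) ∘ₗ π i) x := by
  simp only [partitionSum]
  rw [sum_refinement _ π fun r => Φ r (T (r x)), Fin.sum_univ_two]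
  rfl

end PartitionSum

lemma partitionSum_mem_atomicSumSet {G H : Type*} [Lattice G] [AddCommGroup G] [Module ℝ G]
    [AddCommGroup H] [Module ℝ H] (Φ : (G →ₗ[ℝ] G) → (H →ₗ[ℝ] H)) (T : G → H) {n : ℕ}
    {π : Fin n → G →ₗ[ℝ] G} (hπ : IsPartitionOfIdentity π) (x : G) :
    partitionSum Φ T π x ∈ atomicSumSet Φ T x :=
  ⟨n, π, hπ, rfl⟩

lemma atomicSumSet_nonempty {G H : Type*} [Lattice G] [AddCommGroup G] [Module ℝ G]
    [AddCommGroup H] [Module ℝ H] (Φ : (G →ₗ[ℝ] G) → (H →ₗ[ℝ] H)) (T : G → H) (x : G) :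
    (atomicSumSet Φ T x).Nonempty :=
  ⟨_, partitionSum_mem_atomicSumSet Φ T (π := fun _ : Fin 1 => LinearMap.id)
    ⟨fun _ => isOrderProjection_id, fun i j hij => absurd (Subsingleton.elim i j) hij, by simp⟩ x⟩

section Operator

variable {G H : Type*} [Lattice G] [AddCommGroup G] [Module ℝ G] [AddLeftMono G]
  [AddCommGroup H] [Module ℝ H] {Φ : (G →ₗ[ℝ] G) → (H →ₗ[ℝ] H)} {T : G → H}
  {p : G →ₗ[ℝ] G} {n : ℕ} {π : Fin n → G →ₗ[ℝ] G}

lemma partitionSum_refinement_pair_apply (hT0 : T 0 = 0) (hp : IsOrderProjection p)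
    (hπ : ∀ i, IsOrderProjection (π i)) (x : G) :
    partitionSum Φ T (refinement ![p, LinearMap.id - p] π) (p x) =
      partitionSum Φ T (fun i => p ∘ₗ π i) x := by
  have hcomm : ∀ i, π i (p x) = p (π i x) := fun i => LinearMap.congr_fun ((hπ i).comm hp) x
  rw [partitionSum_refinement_pair, partitionSum, partitionSum, partitionSum]
  simp [hcomm, hp.1, hT0]

variable [Lattice H]

lemma map_partitionSum_refinement_pair (hΦ : IsBooleanHom Φ) (hp : IsOrderProjection p)
    (hπ : ∀ i, IsOrderProjection (π i)) (x : G) :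
    Φ p (partitionSum Φ T (refinement ![p, LinearMap.id - p] π) x) =
      partitionSum Φ T (fun i => p ∘ₗ π i) x := by
  have hleft : ∀ i, p ∘ₗ (p ∘ₗ π i) = p ∘ₗ π i := fun i => by
    rw [← LinearMap.comp_assoc, hp.comp_self]
  have hright : ∀ i, p ∘ₗ ((LinearMap.id - p) ∘ₗ π i) = 0 := fun i => by
    rw [← LinearMap.comp_assoc, hp.comp_compl, LinearMap.zero_comp]
  rw [partitionSum_refinement_pair, map_add, partitionSum, partitionSum, map_sum, map_sum]
  simp only [hΦ.map_apply_map_apply hp (hp.comp (hπ _)),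
    hΦ.map_apply_map_apply hp (hp.compl_s11.comp (hπ _)), hleft, hright, hΦ.map_zero,
    LinearMap.zero_apply, Finset.sum_const_zero, add_zero]

variable [AddLeftMono H]

lemma partitionSum_comp_le_map (hΦ : IsBooleanHom Φ) (hT : IsOrthogonallyAdditive T)
    (hTpos : ∀ x, 0 ≤ T x) (hp : IsOrderProjection p) (hπ : ∀ i, IsOrderProjection (π i))
    (x : G) : partitionSum Φ T (fun i => p ∘ₗ π i) x ≤ Φ p (partitionSum Φ T π x) := by
  rw [partitionSum, partitionSum, map_sum]
  refine Finset.sum_le_sum fun i _ => ?_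
  calc Φ (p ∘ₗ π i) (T (p (π i x))) ≤ Φ (p ∘ₗ π i) (T (π i x)) :=
        (hΦ.1 _ (hp.comp (hπ i))).monotone_s11 (hT.apply_le hTpos hp _)
    _ = Φ p (Φ (π i) (T (π i x))) := (hΦ.map_apply_map_apply hp (hπ i) _).symm

lemma partitionSum_comp_le_apply (hΦ : IsBooleanHom Φ) (hTpos : ∀ x, 0 ≤ T x)
    (hp : IsOrderProjection p) (hπ : ∀ i, IsOrderProjection (π i)) (x : G) :
    partitionSum Φ T (fun i => p ∘ₗ π i) x ≤ partitionSum Φ T π (p x) := by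
  refine Finset.sum_le_sum fun i _ => ?_
  have hcomm : π i (p x) = p (π i x) := LinearMap.congr_fun ((hπ i).comm hp) x
  calc Φ (p ∘ₗ π i) (T (p (π i x))) = Φ p (Φ (π i) (T (p (π i x)))) :=
        (hΦ.map_apply_map_apply hp (hπ i) _).symm
    _ ≤ Φ (π i) (T (π i (p x))) := by
        rw [hcomm]
        exact ((hΦ.1 p hp).2 _ ((hΦ.1 _ (hπ i)).2 _ (hTpos _)).1).2

lemma IsAtomic.le_partitionSum {S : G → H} (hΦ : IsBooleanHom Φ) (hS : IsAtomic Φ S)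
    (hST : ∀ x, S x ≤ T x) (hπ : IsPartitionOfIdentity π) (x : G) :
    S x ≤ partitionSum Φ T π x := by
  -- `Φ(πᵢ)(S x) = S(πᵢ x) = Φ(πᵢ)(S(πᵢ x)) ≤ Φ(πᵢ)(T(πᵢ x))`
  have key : ∀ i, Φ (π i) (S x) ≤ Φ (π i) (T (π i x)) := fun i => by
    rw [← hS _ (hπ.1 i), ← (hπ.1 i).1 x, hS _ (hπ.1 i) (π i x), (hπ.1 i).1 x]
    exact (hΦ.1 _ (hπ.1 i)).monotone_s11 (hST _)
  calc S x = ∑ i, Φ (π i) (S x) := by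
        rw [← LinearMap.sum_apply, hΦ.sum_map_eq_id hπ, LinearMap.id_apply]
    _ ≤ partitionSum Φ T π x := Finset.sum_le_sum fun i _ => key i

lemma isAtomic_of_isGLB (hΦ : IsBooleanHom Φ) (hT : IsOrthogonallyAdditive T)
    (hTpos : ∀ x, 0 ≤ T x) {R : G → H} (hR : ∀ x, IsGLB (atomicSumSet Φ T x) (R x)) :
    IsAtomic Φ R := by
  intro p hp x
  have hpair := isPartitionOfIdentity_pair hp
  apply le_antisymm
  · refine ((hΦ.1 p hp).isGLB_image (atomicSumSet_nonempty Φ T x) (hR x)).2 ?_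
    rintro _ ⟨_, ⟨n, π, hπ, rfl⟩, rfl⟩
    calc R (p x) ≤ partitionSum Φ T (refinement ![p, LinearMap.id - p] π) (p x) :=
          (hR (p x)).1 (partitionSum_mem_atomicSumSet Φ T (hpair.refinement hπ) _)
      _ = partitionSum Φ T (fun i => p ∘ₗ π i) x :=
          partitionSum_refinement_pair_apply hT.map_zero hp hπ.1 x
      _ ≤ Φ p (partitionSum Φ T π x) := partitionSum_comp_le_map hΦ hT hTpos hp hπ.1 x
  · refine (hR (p x)).2 ?_
    rintro _ ⟨n, π, hπ, rfl⟩
    calc Φ p (R x) ≤ Φ p (partitionSum Φ T (refinement ![p, LinearMap.id - p] π) x) :=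
          (hΦ.1 p hp).monotone_s11
            ((hR x).1 (partitionSum_mem_atomicSumSet Φ T (hpair.refinement hπ) x))
      _ = partitionSum Φ T (fun i => p ∘ₗ π i) x :=
          map_partitionSum_refinement_pair hΦ hp hπ.1 x
      _ ≤ partitionSum Φ T π (p x) := partitionSum_comp_le_apply hΦ hTpos hp hπ.1 x

end Operator

theorem atomic_projection_is_component_general
    (Φ : (E →ₗ[ℝ] E) → (F →ₗ[ℝ] F)) (hΦ : IsBooleanHom Φ)
    (T : E → F) (hTpos : ∀ x : E, 0 ≤ T x)
    (hToa : ∀ x y : E, VDisjoint x y → T (x + y) = T x + T y)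
    (R : E → F) (hR : ∀ x : E, IsGLB (atomicSumSet Φ T x) (R x)) :
    IsAtomic Φ R ∧
    ∀ S : E → F, (∀ x : E, 0 ≤ S x) →
      (∀ x y : E, VDisjoint x y → S (x + y) = S x + S y) →
      IsAtomic Φ S → (∀ x : E, S x ≤ T x) → ∀ x : E, S x ≤ R x := by
  refine ⟨isAtomic_of_isGLB hΦ hToa hTpos hR, fun S _ _ hS hST x => (hR x).2 ?_⟩
  rintro _ ⟨n, π, hπ, rfl⟩
  exact hS.le_partitionSum hΦ hST hπ x

/-- `R(T)` is atomic subordinate to `Φ` and is the greatest atomic minorant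
of `T`; it is the component of `T` in the band of atomic operators. -/
theorem atomic_projection_is_component
    (hE : HasPPP E) (hF : DedekindComplete F)
    (Φ : (E →ₗ[ℝ] E) → (F →ₗ[ℝ] F)) (hΦ : IsBooleanHom Φ)
    (T : E → F) (hTpos : ∀ x : E, 0 ≤ T x)
    (hToa : ∀ x y : E, VDisjoint x y → T (x + y) = T x + T y)
    (R : E → F) (hR : ∀ x : E, IsGLB (atomicSumSet Φ T x) (R x)) :
    IsAtomic Φ R ∧
    ∀ S : E → F, (∀ x : E, 0 ≤ S x) →
      (∀ x y : E, VDisjoint x y → S (x + y) = S x + S y) →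
      IsAtomic Φ S → (∀ x : E, S x ≤ T x) → ∀ x : E, S x ≤ R x :=
  atomic_projection_is_component_general Φ hΦ T hTpos hToa R hR

end VL
end
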